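/- arXiv:2502.03595 — 4 statements merged into one kernel-verified Lean document; each statement's English description precedes it below -/
import Mathlib

section
/- If X is path-connected, then the path components of (X×F)/G are precisely the images in (X×F)/G of the sets X × O, where O ranges over the G-orbits in F; in particular each such image is path-connected, open, and closed in (X×F)/G. -/
/-!
The second projection induces a continuous map `(X × F)/G → F/G` into a discrete space, and the
image of `X × O` is its fibre over the orbit `O`; fibres of a continuous map into a discrete
space are clopen. Each fibre is also path-connected: choosing `v ∈ O`, every class `[x, g • v]`
equals `[g⁻¹ • x, v]`, so the fibre is the image of the path-connected space `X` under
`x ↦ [x, v]`. A clopen path-connected set is the path component of each of its points.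
-/

open MulAction

instance Quotient.discreteTopology {α : Type*} [TopologicalSpace α] [DiscreteTopology α]
    (s : Setoid α) : DiscreteTopology (Quotient s) :=
  discreteTopology_iff_forall_isOpen.2 fun _ ↦ isOpen_coinduced.2 (isOpen_discrete _)

theorem IsPathConnected.pathComponent_eq_of_isClopen {Y : Type*} [TopologicalSpace Y]
    {s : Set Y} {y : Y} (hs : IsPathConnected s) (hs' : IsClopen s) (hy : y ∈ s) :
    pathComponent y = s :=
  ((pathComponent_subset_component y).trans (hs'.connectedComponent_subset hy)).antisymm
    (hs.subset_pathComponent hy)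

namespace MulAction.orbitRel.Quotient

variable {G X F : Type*} [Group G] [MulAction G X] [MulAction G F]

def prodSnd : orbitRel.Quotient G (X × F) → orbitRel.Quotient G F :=
  Quotient.map' Prod.snd fun _ _ ⟨g, hg⟩ ↦ ⟨g, congrArg Prod.snd hg⟩

theorem image_mk_setOf_snd_mem_orbit (ω : orbitRel.Quotient G F) :
    Quotient.mk (orbitRel G (X × F)) '' {xv : X × F | xv.2 ∈ ω.orbit} =
      prodSnd ⁻¹' {ω} := by
  have : {xv : X × F | xv.2 ∈ ω.orbit} = Quotient.mk _ ⁻¹' (prodSnd ⁻¹' {ω}) := by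
    ext xv
    exact mem_orbit
  rw [this, Set.image_preimage_eq _ Quotient.mk_surjective]

theorem prodSnd_preimage_singleton_eq_range (ω : orbitRel.Quotient G F) :
    prodSnd ⁻¹' {ω} =
      Set.range fun x : X ↦ Quotient.mk (orbitRel G (X × F)) (x, ω.out) := by
  refine subset_antisymm ?_ ?_
  · rintro ⟨x, v⟩ (hv : Quotient.mk'' v = ω)
    obtain ⟨g, rfl⟩ : v ∈ MulAction.orbit G ω.out :=
      Quotient.exact' (hv.trans ω.out_eq'.symm)
    exact ⟨g⁻¹ • x, Quotient.sound ⟨g⁻¹, by simp [Prod.smul_mk]⟩⟩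
  · rintro _ ⟨x, rfl⟩
    exact ω.out_eq'

variable [TopologicalSpace X] [TopologicalSpace F]

theorem continuous_prodSnd : Continuous (prodSnd : orbitRel.Quotient G (X × F) → _) :=
  continuous_snd.quotient_map' _

theorem isPathConnected_prodSnd_preimage_singleton [PathConnectedSpace X]
    (ω : orbitRel.Quotient G F) :
    IsPathConnected (prodSnd ⁻¹' {ω} : Set (orbitRel.Quotient G (X × F))) := by
  rw [prodSnd_preimage_singleton_eq_range]
  exact isPathConnected_range (continuous_quotient_mk'.comp (Continuous.prodMk_left _))

theorem pathComponent_eq_prodSnd_preimage [DiscreteTopology F] [PathConnectedSpace X]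
    (q : orbitRel.Quotient G (X × F)) : pathComponent q = prodSnd ⁻¹' {prodSnd q} :=
  (isPathConnected_prodSnd_preimage_singleton _).pathComponent_eq_of_isClopen
    ((isClopen_discrete _).preimage continuous_prodSnd) rfl

end MulAction.orbitRel.Quotient

open MulAction.orbitRel.Quotient

theorem stmt_3_general {G X F : Type*} [Group G] [TopologicalSpace X] [MulAction G X]
    [TopologicalSpace F] [DiscreteTopology F]
    [MulAction G F] [PathConnectedSpace X] :
    ({C : Set (Quotient (orbitRel G (X × F))) | ∃ q, C = pathComponent q} =
      {C : Set (Quotient (orbitRel G (X × F))) | ∃ ω : orbitRel.Quotient G F,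
        C = Quotient.mk (orbitRel G (X × F)) '' {xv : X × F | xv.2 ∈ ω.orbit}}) ∧
    ∀ ω : orbitRel.Quotient G F,
      IsPathConnected
        (Quotient.mk (orbitRel G (X × F)) '' {xv : X × F | xv.2 ∈ ω.orbit}) ∧
      IsOpen (Quotient.mk (orbitRel G (X × F)) '' {xv : X × F | xv.2 ∈ ω.orbit}) ∧
      IsClosed (Quotient.mk (orbitRel G (X × F)) '' {xv : X × F | xv.2 ∈ ω.orbit}) := by
  simp only [image_mk_setOf_snd_mem_orbit]
  refine ⟨?_, fun ω ↦ ⟨isPathConnected_prodSnd_preimage_singleton ω,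
    (isOpen_discrete _).preimage continuous_prodSnd,
    (isClosed_discrete _).preimage continuous_prodSnd⟩⟩
  ext C
  constructor
  · rintro ⟨q, rfl⟩
    exact ⟨prodSnd q, pathComponent_eq_prodSnd_preimage q⟩
  · rintro ⟨ω, rfl⟩
    obtain ⟨q, hq⟩ := (isPathConnected_prodSnd_preimage_singleton (X := X) ω).nonempty
    exact ⟨q, by rw [pathComponent_eq_prodSnd_preimage, hq]⟩

/-- If `X` is path-connected, then the path components of `(X × F)/G` are
precisely the images in `(X × F)/G` of the sets `X × O`, where `O` ranges over the
`G`-orbits in `F`; in particular each such image is path-connected, open, and closed. -/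
theorem stmt_3 {G X F : Type*} [Group G] [TopologicalSpace X] [MulAction G X]
    [ContinuousConstSMul G X] [TopologicalSpace F] [DiscreteTopology F] [Finite F]
    [MulAction G F] [PathConnectedSpace X] :
    ({C : Set (Quotient (orbitRel G (X × F))) | ∃ q, C = pathComponent q} =
      {C : Set (Quotient (orbitRel G (X × F))) | ∃ ω : orbitRel.Quotient G F,
        C = Quotient.mk (orbitRel G (X × F)) '' {xv : X × F | xv.2 ∈ ω.orbit}}) ∧
    ∀ ω : orbitRel.Quotient G F,
      IsPathConnected
        (Quotient.mk (orbitRel G (X × F)) '' {xv : X × F | xv.2 ∈ ω.orbit}) ∧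
      IsOpen (Quotient.mk (orbitRel G (X × F)) '' {xv : X × F | xv.2 ∈ ω.orbit}) ∧
      IsClosed (Quotient.mk (orbitRel G (X × F)) '' {xv : X × F | xv.2 ∈ ω.orbit}) :=
  stmt_3_general
end

section
/- Let x ∈ X with stabilizer G_x, let v ∈ F with stabilizer G_v = {g ∈ G : g•v = v}, and let U be an open neighbourhood of x that is invariant under G_x and satisfies g•U ∩ U = ∅ for every g ∉ G_x. Then the map U → (X×F)/G sending u to the class of (u, v) induces a homeomorphism from the orbit space U/(G_x ∩ G_v) (quotient of U by the restricted (G_x ∩ G_v)-action, with quotient topology) onto an open subset of (X×F)/G. -/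
/-! The map `⟦u⟧ ↦ ⟦(u, v)⟧` is well defined and continuous because `G_x ⊓ G_v` fixes `v`. It is
open because it factors `u ↦ ⟦(u, v)⟧`, a composite of the open maps `U → X × F → (X × F)/G`,
through the quotient map of `U`. It is injective because any `g` with `g • (u', v) = (u, v)`
moves a point of `U` into `U`, hence lies in `G_x` by disjointness, and fixes `v`. -/

open MulAction

/-- The setoid on a subset `U ⊆ X` whose classes are the orbits of the restricted action of
a subgroup `H ≤ G` on `U`. -/
def subSetoid {G X : Type*} [Group G] [MulAction G X] (H : Subgroup G) (U : Set X) :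
    Setoid ↥U where
  r u u' := ∃ g ∈ H, g • (u : X) = (u' : X)
  iseqv := by
    constructor
    · exact fun u => ⟨1, H.one_mem, one_smul G (u : X)⟩
    · rintro u u' ⟨g, hg, h⟩
      exact ⟨g⁻¹, H.inv_mem hg, by rw [← h, inv_smul_smul]⟩
    · rintro u u' u'' ⟨g, hg, h⟩ ⟨g', hg', h'⟩
      exact ⟨g' * g, H.mul_mem hg' hg, by rw [mul_smul, h, h']⟩

theorem IsOpenMap.prodMk_left {X F : Type*} [TopologicalSpace X] [TopologicalSpace F] {v : F}
    (hv : IsOpen ({v} : Set F)) : IsOpenMap fun x : X => (x, v) := fun s hs => by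
  rw [← Set.prod_singleton]
  exact hs.prod hv

theorem mem_of_smul_mem_of_disjoint {G X : Type*} [Group G] [MulAction G X] {K : Subgroup G}
    {U : Set X} (hdisj : ∀ g : G, g ∉ K → Disjoint ((g • ·) '' U) U) {g : G} {u : X}
    (hu : u ∈ U) (hgu : g • u ∈ U) : g ∈ K := by
  by_contra hg
  exact Set.disjoint_left.mp (hdisj g hg) ⟨u, hu, rfl⟩ hgu

section SliceMap

variable {G X F : Type*} [Group G] [MulAction G X] [MulAction G F]

def sliceMap (H : Subgroup G) (U : Set X) (v : F) (hH : H ≤ stabilizer G v) :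
    Quotient (subSetoid H U) → Quotient (orbitRel G (X × F)) :=
  Quotient.lift (fun u : ↥U => Quotient.mk (orbitRel G (X × F)) ((u : X), v)) <| by
    rintro u u' ⟨g, hg, hgu⟩
    refine (Quotient.sound (orbitRel_apply.mpr ⟨g, ?_⟩)).symm
    change g • ((u : X), v) = _
    rw [Prod.smul_mk, hgu, mem_stabilizer_iff.mp (hH hg)]

variable {H : Subgroup G} {U : Set X} {v : F}

theorem sliceMap_injective {K : Subgroup G} (hdisj : ∀ g : G, g ∉ K → Disjoint ((g • ·) '' U) U) :
    Function.Injective (sliceMap (K ⊓ stabilizer G v) U v inf_le_right) := by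
  rintro ⟨u⟩ ⟨u'⟩ h
  obtain ⟨g, hg⟩ := orbitRel_apply.mp (Quotient.exact h)
  obtain ⟨hgu, hgv⟩ := Prod.mk.inj (hg : g • ((u' : X), v) = ((u : X), v))
  have hgK : g ∈ K := mem_of_smul_mem_of_disjoint hdisj u'.2 (hgu ▸ u.2)
  exact (Quotient.sound
    (show (subSetoid (K ⊓ stabilizer G v) U).r u' u from ⟨g, ⟨hgK, hgv⟩, hgu⟩)).symm

variable [TopologicalSpace X] [TopologicalSpace F]

theorem continuous_sliceMap (hH : H ≤ stabilizer G v) : Continuous (sliceMap H U v hH) :=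
  continuous_quot_mk.comp (continuous_subtype_val.prodMk continuous_const) |>.quotient_lift _

theorem isOpenMap_sliceMap [ContinuousConstSMul G X] [ContinuousConstSMul G F]
    (hH : H ≤ stabilizer G v) (hU : IsOpen U) (hv : IsOpen ({v} : Set F)) :
    IsOpenMap (sliceMap H U v hH) :=
  IsOpenMap.of_comp continuous_quot_mk Quot.mk_surjective <|
    isOpenMap_quotient_mk'_mul.comp ((IsOpenMap.prodMk_left hv).comp hU.isOpenMap_subtype_val)

end SliceMap

theorem stmt_5_general {G X F : Type*} [Group G] [TopologicalSpace X] [MulAction G X]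
    [ContinuousConstSMul G X] [TopologicalSpace F] [DiscreteTopology F]
    [MulAction G F] (x : X) (v : F) (U : Set X) (hUopen : IsOpen U)
    (hdisj : ∀ g : G, g ∉ stabilizer G x → Disjoint ((g • ·) '' U) U) :
    ∃ e : Quotient (subSetoid (stabilizer G x ⊓ stabilizer G v) U) →
        Quotient (orbitRel G (X × F)),
      (∀ u : ↥U, e (Quotient.mk (subSetoid (stabilizer G x ⊓ stabilizer G v) U) u) =
        Quotient.mk (orbitRel G (X × F)) ((u : X), v)) ∧
      Topology.IsOpenEmbedding e := by
  have : ContinuousConstSMul G F := ⟨fun _ => continuous_of_discreteTopology⟩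
  refine ⟨sliceMap _ U v inf_le_right, fun _ => rfl, ?_⟩
  exact .of_continuous_injective_isOpenMap (continuous_sliceMap _) (sliceMap_injective hdisj)
    (isOpenMap_sliceMap _ hUopen (isOpen_discrete _))

/-- Let `x ∈ X` with stabilizer `G_x`, let `v ∈ F` with stabilizer `G_v`,
and let `U` be an open neighbourhood of `x`, invariant under `G_x`, with `g • U ∩ U = ∅`
for `g ∉ G_x`.  Then `u ↦ ⟦(u, v)⟧` induces a homeomorphism from `U/(G_x ∩ G_v)` onto an
open subset of `(X × F)/G` (an open embedding). -/
theorem stmt_5 {G X F : Type*} [Group G] [TopologicalSpace X] [MulAction G X]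
    [ContinuousConstSMul G X] [TopologicalSpace F] [DiscreteTopology F] [Finite F]
    [MulAction G F] (x : X) (v : F) (U : Set X) (hUopen : IsOpen U) (hxU : x ∈ U)
    (hinv : ∀ g ∈ stabilizer G x, ∀ u ∈ U, g • u ∈ U)
    (hdisj : ∀ g : G, g ∉ stabilizer G x → Disjoint ((g • ·) '' U) U) :
    ∃ e : Quotient (subSetoid (stabilizer G x ⊓ stabilizer G v) U) →
        Quotient (orbitRel G (X × F)),
      (∀ u : ↥U, e (Quotient.mk (subSetoid (stabilizer G x ⊓ stabilizer G v) U) u) =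
        Quotient.mk (orbitRel G (X × F)) ((u : X), v)) ∧
      Topology.IsOpenEmbedding e :=
  stmt_5_general x v U hUopen hdisj
end

section
/- Let G be the symmetric group on three letters, realized as the group of permutations of Fin 3. The set of quadruples (c₁, c₂, c₃, c₄) ∈ G⁴ satisfying c₁·c₂·c₃·c₄ = 1, orderOf c₁ = 2, orderOf c₂ = 2, orderOf c₃ = 3, orderOf c₄ = 3, and such that {c₁, c₂, c₃, c₄} generates G, has exactly 12 elements. -/
/- `Σ₃` has order `6 = 2 · 3`, so by Lagrange any subgroup containing an element of
order 2 and one of order 3 is all of `Σ₃`; the generation condition is therefore automatic for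
signature `(0; 2, 2, 3, 3)`. What remains is counting the solutions of `c₁c₂c₃c₄ = 1` with the
prescribed orders, a finite check: for `c₁ = c₂` any 3-cycle `c₃` works (`3 · 2` choices), for
`c₁ ≠ c₂` the 3-cycle `c₃` must equal `c₁c₂` (`3 · 2` choices). -/

/-- The set of generating vectors of a group `G` with signature `(0; m₁, m₂, m₃, m₄)`:
quadruples with product `1`, prescribed element orders, whose entries generate `G`. -/
def GenVec (G : Type*) [Group G] (m₁ m₂ m₃ m₄ : ℕ) : Set (G × G × G × G) :=
  {c | c.1 * c.2.1 * c.2.2.1 * c.2.2.2 = 1 ∧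
       orderOf c.1 = m₁ ∧ orderOf c.2.1 = m₂ ∧ orderOf c.2.2.1 = m₃ ∧
       orderOf c.2.2.2 = m₄ ∧
       Subgroup.closure {c.1, c.2.1, c.2.2.1, c.2.2.2} = ⊤}

theorem Subgroup.eq_top_of_mem_of_orderOf_coprime {G : Type*} [Group G] [Finite G]
    {H : Subgroup G} {x y : G} (hx : x ∈ H) (hy : y ∈ H)
    (hcop : (orderOf x).Coprime (orderOf y)) (hcard : Nat.card G = orderOf x * orderOf y) :
    H = ⊤ := by
  have hx_dvd : orderOf x ∣ Nat.card H := by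
    simpa using Subgroup.orderOf_dvd_natCard H hx
  have hy_dvd : orderOf y ∣ Nat.card H := by
    simpa using Subgroup.orderOf_dvd_natCard H hy
  have hG_dvd : Nat.card G ∣ Nat.card H := hcard ▸ hcop.mul_dvd_of_dvd_of_dvd hx_dvd hy_dvd
  exact H.eq_top_of_card_eq (Nat.dvd_antisymm (Subgroup.card_subgroup_dvd_card H) hG_dvd)

theorem genVec_eq_of_orderOf_coprime {G : Type*} [Group G] [Finite G] {m₁ m₂ m₃ m₄ : ℕ}
    (hcop : m₁.Coprime m₃) (hcard : Nat.card G = m₁ * m₃) :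
    GenVec G m₁ m₂ m₃ m₄ = {c | c.1 * c.2.1 * c.2.2.1 * c.2.2.2 = 1 ∧
       orderOf c.1 = m₁ ∧ orderOf c.2.1 = m₂ ∧ orderOf c.2.2.1 = m₃ ∧
       orderOf c.2.2.2 = m₄} := by
  ext ⟨a, b, c, d⟩
  simp only [GenVec, Set.mem_ofPred_eq]
  refine ⟨fun ⟨hprod, ha, hb, hc, hd, _⟩ ↦ ⟨hprod, ha, hb, hc, hd⟩,
    fun ⟨hprod, ha, hb, hc, hd⟩ ↦ ⟨hprod, ha, hb, hc, hd, ?_⟩⟩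
  subst ha hc
  exact Subgroup.eq_top_of_mem_of_orderOf_coprime (Subgroup.subset_closure (by simp))
    (Subgroup.subset_closure (by simp)) hcop hcard

/-- For `G = Σ₃`, the permutations of `Fin 3`, there are exactly `12`
generating vectors `(c₁, c₂, c₃, c₄)` with `c₁·c₂·c₃·c₄ = 1`, orders `2, 2, 3, 3`, whose
entries generate `G`. -/
theorem stmt_12 : Nat.card (GenVec (Equiv.Perm (Fin 3)) 2 2 3 3) = 12 := by
  have hcard : Nat.card (Equiv.Perm (Fin 3)) = 2 * 3 := by
    rw [Nat.card_perm, Nat.card_eq_fintype_card, Fintype.card_fin]; rfl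
  rw [genVec_eq_of_orderOf_coprime (by norm_num) hcard]
  -- `orderOf` is not decidable, but at prime orders it becomes a condition on powers.
  simp only [orderOf_eq_prime_iff]
  rw [Nat.card_eq_fintype_card]
  set_option maxRecDepth 20000 in decide
end

section
/- Let G be the group of permutations of Fin 3, let x be the transposition swapping 0 and 1, and let y be the 3-cycle sending 0↦1↦2↦0. Consider the set of quadruples (c₁, c₂, c₃, c₄) ∈ G⁴ with c₁·c₂·c₃·c₄ = 1, orderOf c₁ = orderOf c₂ = 2, orderOf c₃ = orderOf c₄ = 3, and whose entries generate G, with the automorphism group Aut(G) acting componentwise (ω·(c₁,c₂,c₃,c₄) = (ω(c₁),ω(c₂),ω(c₃),ω(c₄))). Then this action has exactly two orbits, the quadruples (x, x, y, y⁻¹) and (x, x·y, y, y) belong to this set, and they lie in different orbits. -/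
/-- Two quadruples are `Aut(G)`-related if some automorphism of `G` maps one to the other
componentwise. -/
def AutRel (G : Type*) [Group G] (v w : G × G × G × G) : Prop :=
  ∃ ω : MulAut G, (ω v.1, ω v.2.1, ω v.2.2.1, ω v.2.2.2) = w


/-!
Automorphisms preserve generating vectors, so we may normalise by conjugation. `Σ₃` acts
transitively by conjugation on pairs (transposition, 3-cycle), so every generating vector is
conjugate to one of the form `(x, c, y, d)`. Then `d ∈ {y, y⁻¹}`, and the product relation forces
`c = x⁻¹ (y d)⁻¹`, i.e. `c = x` or `c = x y`. The two normal forms are not related since an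
automorphism preserves the equality of the first two entries.
-/

open Equiv

theorem GenVec.map_mulEquiv {G H : Type*} [Group G] [Group H] {m₁ m₂ m₃ m₄ : ℕ}
    {v : G × G × G × G} (hv : v ∈ GenVec G m₁ m₂ m₃ m₄) (ω : G ≃* H) :
    (ω v.1, ω v.2.1, ω v.2.2.1, ω v.2.2.2) ∈ GenVec H m₁ m₂ m₃ m₄ := by
  obtain ⟨hprod, h₁, h₂, h₃, h₄, hgen⟩ := hv
  refine ⟨?_, by simpa, by simpa, by simpa, by simpa, ?_⟩
  · simp only [← map_mul, hprod, map_one]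
  · have := congrArg (Subgroup.map ω.toMonoidHom) hgen
    rw [MonoidHom.map_closure, Subgroup.map_top_of_surjective _ ω.surjective] at this
    simpa [Set.image_insert_eq] using this

theorem not_autRel_of_fst_eq_snd {G : Type*} [Group G] {v w : G × G × G × G}
    (hv : v.1 = v.2.1) (hw : w.1 ≠ w.2.1) : ¬ AutRel G v w := by
  rintro ⟨ω, rfl⟩
  exact hw (congrArg ω hv)

theorem eq_inv_mul_inv_of_mul_mul_mul_eq_one {G : Type*} [Group G] {a b c d : G}
    (h : a * b * c * d = 1) : b = a⁻¹ * (c * d)⁻¹ := by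
  rw [eq_inv_mul_iff_mul_eq]
  exact eq_inv_of_mul_eq_one_left (by rwa [← mul_assoc])

namespace Equiv.Perm

theorem closure_finRotate_swap (n : ℕ) :
    Subgroup.closure {finRotate (n + 2), swap 0 1} = ⊤ := by
  simpa using closure_cycle_adjacent_swap isCycle_finRotate support_finRotate 0

theorem closure_eq_top_of_swap_mem_of_finRotate_mem {n : ℕ} {s : Set (Perm (Fin (n + 2)))}
    (hx : swap 0 1 ∈ s) (hy : finRotate (n + 2) ∈ Subgroup.closure s) :
    Subgroup.closure s = ⊤ := by
  rw [eq_top_iff, ← closure_finRotate_swap, Subgroup.closure_le]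
  rintro _ (rfl | rfl)
  exacts [hy, Subgroup.subset_closure hx]

theorem exists_conj_eq_swap_finRotate {t r : Perm (Fin 3)} (ht : orderOf t = 2)
    (hr : orderOf r = 3) :
    ∃ g : Perm (Fin 3), g * t * g⁻¹ = swap 0 1 ∧ g * r * g⁻¹ = finRotate 3 := by
  have key : ∀ t r : Perm (Fin 3), t ^ 2 = 1 ∧ t ≠ 1 → r ^ 3 = 1 ∧ r ≠ 1 →
      ∃ g : Perm (Fin 3), g * t * g⁻¹ = swap 0 1 ∧ g * r * g⁻¹ = finRotate 3 := by
    decide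
  exact key t r (orderOf_eq_prime_iff.mp ht) (orderOf_eq_prime_iff.mp hr)

theorem eq_finRotate_or_inv_of_orderOf_eq_three {r : Perm (Fin 3)} (hr : orderOf r = 3) :
    r = finRotate 3 ∨ r = (finRotate 3)⁻¹ := by
  have key : ∀ r : Perm (Fin 3), r ^ 3 = 1 ∧ r ≠ 1 → r = finRotate 3 ∨ r = (finRotate 3)⁻¹ := by
    decide
  exact key r (orderOf_eq_prime_iff.mp hr)

theorem autRel_of_mem_genVec {v : Perm (Fin 3) × Perm (Fin 3) × Perm (Fin 3) × Perm (Fin 3)}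
    (hv : v ∈ GenVec (Perm (Fin 3)) 2 2 3 3) :
    AutRel _ v (swap 0 1, swap 0 1, finRotate 3, (finRotate 3)⁻¹) ∨
      AutRel _ v (swap 0 1, swap 0 1 * finRotate 3, finRotate 3, finRotate 3) := by
  obtain ⟨g, hg₁, hg₃⟩ := exists_conj_eq_swap_finRotate hv.2.1 hv.2.2.2.1
  obtain ⟨hprod, -, -, -, h₄, -⟩ := GenVec.map_mulEquiv hv (MulAut.conj g)
  simp only [MulAut.conj_apply, hg₁, hg₃] at hprod h₄
  have h₂ := eq_inv_mul_inv_of_mul_mul_mul_eq_one hprod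
  rcases eq_finRotate_or_inv_of_orderOf_eq_three h₄ with h₄ | h₄
  · right
    refine ⟨MulAut.conj g, ?_⟩
    simp only [MulAut.conj_apply, hg₁, hg₃, h₂, h₄]
    decide
  · left
    refine ⟨MulAut.conj g, ?_⟩
    simp only [MulAut.conj_apply, hg₁, hg₃, h₂, h₄]
    decide

end Equiv.Perm

/-- For `G` the permutations of `Fin 3`, `x` the transposition `(0 1)` and
`y` the 3-cycle `0 ↦ 1 ↦ 2 ↦ 0`, the componentwise `Aut(G)`-action on the generating
vectors of signature `(0;2,2,3,3)` has exactly two orbits; the quadruples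
`(x, x, y, y⁻¹)` and `(x, x·y, y, y)` are generating vectors lying in different orbits,
and every generating vector is related to one of them. -/
theorem stmt_13 (x y : Equiv.Perm (Fin 3)) (hx : x = Equiv.swap 0 1)
    (hy : y = finRotate 3) :
    (x, x, y, y⁻¹) ∈ GenVec (Equiv.Perm (Fin 3)) 2 2 3 3 ∧
    (x, x * y, y, y) ∈ GenVec (Equiv.Perm (Fin 3)) 2 2 3 3 ∧
    ¬ AutRel (Equiv.Perm (Fin 3)) (x, x, y, y⁻¹) (x, x * y, y, y) ∧
    ∀ v ∈ GenVec (Equiv.Perm (Fin 3)) 2 2 3 3,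
      AutRel (Equiv.Perm (Fin 3)) v (x, x, y, y⁻¹) ∨
      AutRel (Equiv.Perm (Fin 3)) v (x, x * y, y, y) := by
  subst hx hy
  have hx : orderOf (swap 0 1 : Perm (Fin 3)) = 2 := orderOf_eq_prime (by decide) (by decide)
  have hxy : orderOf (swap 0 1 * finRotate 3) = 2 := orderOf_eq_prime (by decide) (by decide)
  have hy : orderOf (finRotate 3) = 3 := orderOf_eq_prime (by decide) (by decide)
  refine ⟨⟨by decide, hx, hx, hy, by rwa [orderOf_inv], ?_⟩, ⟨by decide, hx, hxy, hy, hy, ?_⟩,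
    not_autRel_of_fst_eq_snd rfl (by decide), fun v hv => Perm.autRel_of_mem_genVec hv⟩
  · exact Perm.closure_eq_top_of_swap_mem_of_finRotate_mem (by simp)
      ((Subgroup.inv_mem_iff _).mp (Subgroup.subset_closure (by simp)))
  · exact Perm.closure_eq_top_of_swap_mem_of_finRotate_mem (by simp)
      (Subgroup.subset_closure (by simp))
end
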